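/- For every ε > 0 and 0 < δ < e^{-j} ε there exists C > 0 such that for all n, all 0 < t ≤ (j-1)β, and all A ∈ M_j^{β,η} with Ξ(A) = t, the number of j-tuples (x_1,...,x_j) of points in the discrete torus ℤ²_n satisfying (1/2^j) n^{1 - a_{i,l}} ≤ d(x_i, x_l) ≤ 2^j n^{1 - a_{i,l} + δ} for all i ≠ l is at most C n^{2t + 2 + ε/2}. -/
import Mathlib


/-- Membership in the class of ultrametric matrices from the paper. -/
def MemUltra (η : ℝ) {ι : Type*} [Fintype ι] [DecidableEq ι] (A : Matrix ι ι ℝ) : Prop :=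
  A.IsSymm ∧ (∀ i, A i i = 1) ∧
  (∀ i l, i ≠ l → 0 ≤ A i l ∧ A i l ≤ 1 - η) ∧
  (∀ i l p, i ≠ l → l ≠ p → i ≠ p → min (A l p) (A i p) ≤ A i l)

/-- Greedy spanning-tree weight attached to an ordering `σ` of the indices. -/
noncomputable def treeSum {j : ℕ} (A : Matrix (Fin j) (Fin j) ℝ) (σ : Equiv.Perm (Fin j)) : ℝ :=
  ∑ k : Fin j, sSup ((fun i : Fin j => A (σ i) (σ k)) '' {i | i < k})

/-- `Ξ(A) = (j-1) - (maximum spanning tree weight of A)`; for ultrametric matrices this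
agrees with the paper's inductive definition via the maximal decomposition:
`Ξ(A₁ ⊞_s ⋯ ⊞_s A_m) = Σ_k Ξ(A_k) + (m-1)(1-s)`, with `Ξ = 0` on `M₁`. -/
noncomputable def Xi {j : ℕ} (A : Matrix (Fin j) (Fin j) ℝ) : ℝ :=
  ((j : ℝ) - 1) - ⨆ σ : Equiv.Perm (Fin j), treeSum A σ

/-- Euclidean distance on the discrete torus `ℤ²_n = ℤ²/nℤ²`: the smallest Euclidean
length of an integer vector representing the difference. -/
noncomputable def torusDist (n : ℕ) (x y : ZMod n × ZMod n) : ℝ :=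
  sInf {d : ℝ | ∃ p : ℤ × ℤ, ((p.1 : ZMod n), (p.2 : ZMod n)) = x - y ∧
    d = Real.sqrt ((p.1 : ℝ) ^ 2 + (p.2 : ℝ) ^ 2)}

/-- If the torus distance is at most `r`, there is an integer representative of the
difference whose coordinates are smaller than `r + 1` in absolute value. -/
lemma torus_rep (n : ℕ) (x y : ZMod n × ZMod n) (r : ℝ) (h : torusDist n x y ≤ r) :
    ∃ p : ℤ × ℤ, ((p.1 : ZMod n), (p.2 : ZMod n)) = x - y ∧
      |(p.1 : ℝ)| < r + 1 ∧ |(p.2 : ℝ)| < r + 1 := by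
  obtain ⟨a, ha⟩ := ZMod.intCast_surjective (n := n) (x - y).1
  obtain ⟨b, hb⟩ := ZMod.intCast_surjective (n := n) (x - y).2
  have hne : Set.Nonempty {d : ℝ | ∃ p : ℤ × ℤ, ((p.1 : ZMod n), (p.2 : ZMod n)) = x - y ∧
      d = Real.sqrt ((p.1 : ℝ) ^ 2 + (p.2 : ℝ) ^ 2)} :=
    ⟨Real.sqrt ((a : ℝ) ^ 2 + (b : ℝ) ^ 2), ⟨(a, b), by simp [Prod.ext_iff, ha, hb], rfl⟩⟩
  have h' : sInf {d : ℝ | ∃ p : ℤ × ℤ, ((p.1 : ZMod n), (p.2 : ZMod n)) = x - y ∧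
      d = Real.sqrt ((p.1 : ℝ) ^ 2 + (p.2 : ℝ) ^ 2)} ≤ r := h
  obtain ⟨d, hd, hdlt⟩ := exists_lt_of_csInf_lt hne (lt_of_le_of_lt h' (by linarith : r < r + 1))
  obtain ⟨p, hpc, rfl⟩ := hd
  refine ⟨p, hpc, ?_, ?_⟩
  · calc |(p.1 : ℝ)| = Real.sqrt ((p.1 : ℝ) ^ 2) := (Real.sqrt_sq_eq_abs _).symm
      _ ≤ Real.sqrt ((p.1 : ℝ) ^ 2 + (p.2 : ℝ) ^ 2) :=
        Real.sqrt_le_sqrt (by nlinarith [sq_nonneg ((p.2 : ℝ))])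
      _ < r + 1 := hdlt
  · calc |(p.2 : ℝ)| = Real.sqrt ((p.2 : ℝ) ^ 2) := (Real.sqrt_sq_eq_abs _).symm
      _ ≤ Real.sqrt ((p.1 : ℝ) ^ 2 + (p.2 : ℝ) ^ 2) :=
        Real.sqrt_le_sqrt (by nlinarith [sq_nonneg ((p.1 : ℝ))])
      _ < r + 1 := hdlt

lemma rpow_finset_sum {x : ℝ} (hx : 0 < x) {ι : Type*} (s : Finset ι) (f : ι → ℝ) :
    x ^ (∑ i ∈ s, f i) = ∏ i ∈ s, x ^ f i := by
  classical
  induction s using Finset.cons_induction with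
  | empty => simp
  | cons a s ha ih => rw [Finset.sum_cons, Finset.prod_cons, Real.rpow_add hx, ih]

lemma four_mul_le_exp (m : ℕ) : 4 * (m : ℝ) ≤ Real.exp ((m : ℝ) + 1) := by
  set x : ℝ := ((m : ℝ) + 1) / 3 with hx
  have hm : (0 : ℝ) ≤ (m : ℝ) := Nat.cast_nonneg m
  have h1 : x + 1 ≤ Real.exp x := Real.add_one_le_exp x
  have h0 : (0 : ℝ) ≤ x + 1 := by positivity
  have h2 : (x + 1) ^ 3 ≤ (Real.exp x) ^ 3 := pow_le_pow_left₀ h0 h1 3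
  have h3 : (Real.exp x) ^ 3 = Real.exp ((m : ℝ) + 1) := by
    have hxx : Real.exp x * Real.exp x * Real.exp x = Real.exp (x + x + x) := by
      rw [Real.exp_add, Real.exp_add]
    calc (Real.exp x) ^ 3 = Real.exp x * Real.exp x * Real.exp x := by ring
      _ = Real.exp (x + x + x) := hxx
      _ = Real.exp ((m : ℝ) + 1) := by rw [hx]; ring_nf
  have h4 : 4 * (m : ℝ) ≤ (x + 1) ^ 3 := by
    rw [hx]
    nlinarith [mul_nonneg (sq_nonneg ((m : ℝ) - 2)) (show (0 : ℝ) ≤ (m : ℝ) + 16 by linarith)]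
  linarith

/-- The core counting estimate: configurations whose consecutive (along a spanning tree)
points are at torus distance at most `r i` number at most `n² ∏ (7 r i)²`. -/
lemma count_aux {N : ℕ} (n : ℕ) [NeZero n] (σ : Equiv.Perm (Fin (N + 1)))
    (par : Fin N → Fin (N + 1)) (hpar : ∀ i, par i < i.succ)
    (r : Fin N → ℝ) (hr : ∀ i, 1 ≤ r i)
    (S : Set (Fin (N + 1) → ZMod n × ZMod n))
    (hS : ∀ x ∈ S, ∀ i, torusDist n (x (σ (par i))) (x (σ i.succ)) ≤ r i) :
    (S.ncard : ℝ) ≤ (n : ℝ) ^ 2 * ∏ i : Fin N, (7 * r i) ^ 2 := by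
  classical
  set R : Fin N → ℤ := fun i => ⌈r i⌉ + 1 with hR
  set box : Fin N → Finset (ℤ × ℤ) :=
    fun i => Finset.Icc (-(R i)) (R i) ×ˢ Finset.Icc (-(R i)) (R i) with hbox
  have hR1 : ∀ i, (1 : ℤ) ≤ R i := by
    intro i
    have h1 : (1 : ℝ) ≤ (⌈r i⌉ : ℝ) := le_trans (hr i) (Int.le_ceil _)
    have h2 : (1 : ℤ) ≤ ⌈r i⌉ := by exact_mod_cast h1
    simp only [hR]
    omega
  have hstep : ∀ x ∈ S, ∀ i, ∃ p : ℤ × ℤ,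
      ((p.1 : ZMod n), (p.2 : ZMod n)) = x (σ (par i)) - x (σ i.succ) ∧ p ∈ box i := by
    intro x hx i
    obtain ⟨p, hpc, h1, h2⟩ := torus_rep n _ _ _ (hS x hx i)
    refine ⟨p, hpc, ?_⟩
    have hRr : r i + 1 ≤ (R i : ℝ) := by
      simp only [hR]
      push_cast
      linarith [Int.le_ceil (r i)]
    have hb1 := abs_le.mp (le_trans h1.le hRr)
    have hb2 := abs_le.mp (le_trans h2.le hRr)
    simp only [hbox, Finset.mem_product, Finset.mem_Icc]
    exact ⟨⟨by exact_mod_cast hb1.1, by exact_mod_cast hb1.2⟩,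
      by exact_mod_cast hb2.1, by exact_mod_cast hb2.2⟩
  have hch : ∀ x : Fin (N + 1) → ZMod n × ZMod n, ∀ i : Fin N, ∃ p : ℤ × ℤ,
      x ∈ S → (((p.1 : ZMod n), (p.2 : ZMod n)) = x (σ (par i)) - x (σ i.succ) ∧ p ∈ box i) := by
    intro x i
    by_cases hx : x ∈ S
    · obtain ⟨p, h1, h2⟩ := hstep x hx i
      exact ⟨p, fun _ => ⟨h1, h2⟩⟩
    · exact ⟨(0, 0), fun h => absurd h hx⟩
  choose rep hrep using hch
  set f : (Fin (N + 1) → ZMod n × ZMod n) → (ZMod n × ZMod n) × (Fin N → ℤ × ℤ) :=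
    fun x => (x (σ 0), fun i => rep x i) with hf
  have hinj : Set.InjOn f S := by
    intro x hx y hy hxy
    have h0 : x (σ 0) = y (σ 0) := congrArg Prod.fst hxy
    have h1 : ∀ i, rep x i = rep y i := fun i => congrFun (congrArg Prod.snd hxy) i
    have key : ∀ M : ℕ, ∀ k : Fin (N + 1), (k : ℕ) ≤ M → x (σ k) = y (σ k) := by
      intro M
      induction M with
      | zero =>
        intro k hk
        have hk0 : k = 0 := by
          apply Fin.ext
          simpa using Nat.le_zero.mp hk
        rw [hk0]; exact h0
      | succ M ih =>
        intro k hk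
        rcases eq_or_ne k 0 with rfl | hk0
        · exact h0
        · obtain ⟨i, rfl⟩ := Fin.eq_succ_of_ne_zero hk0
          obtain ⟨hx1, _⟩ := hrep x i hx
          obtain ⟨hy1, _⟩ := hrep y i hy
          have hplt : ((par i : Fin (N + 1)) : ℕ) ≤ M := by
            have hlt : ((par i : Fin (N + 1)) : ℕ) < ((i.succ : Fin (N + 1)) : ℕ) :=
              Fin.lt_def.mp (hpar i)
            omega
          have hind := ih (par i) hplt
          have ex : x (σ i.succ) =
              x (σ (par i)) - (((rep x i).1 : ZMod n), ((rep x i).2 : ZMod n)) := by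
            rw [hx1, sub_sub_cancel]
          have ey : y (σ i.succ) =
              y (σ (par i)) - (((rep y i).1 : ZMod n), ((rep y i).2 : ZMod n)) := by
            rw [hy1, sub_sub_cancel]
          rw [ex, ey, hind, h1 i]
    funext l
    have hl := key ((σ.symm l : Fin (N + 1)) : ℕ) (σ.symm l) le_rfl
    rwa [Equiv.apply_symm_apply] at hl
  set T : Finset ((ZMod n × ZMod n) × (Fin N → ℤ × ℤ)) :=
    Finset.univ ×ˢ Fintype.piFinset box with hT
  have hsub : f '' S ⊆ ↑T := by
    rintro _ ⟨x, hx, rfl⟩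
    simp only [hT, Finset.coe_product, Set.mem_prod, Finset.mem_coe, Finset.mem_univ,
      Fintype.coe_piFinset, Set.mem_pi, Set.mem_univ, true_and, forall_true_left, hf]
    intro i
    exact (hrep x i hx).2
  have hcount : S.ncard ≤ T.card := by
    rw [← Set.ncard_coe_finset, ← Set.ncard_image_of_injOn hinj]
    exact Set.ncard_le_ncard hsub T.finite_toSet
  have hTcard : T.card = n * n * ∏ i, (box i).card := by
    simp only [hT]
    rw [Finset.card_product, Finset.card_univ, Fintype.card_piFinset]
    congr 1
    simp [ZMod.card]
  have hboxb : ∀ i, ((box i).card : ℝ) ≤ (7 * r i) ^ 2 := by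
    intro i
    have hcIcc : (Finset.Icc (-(R i)) (R i)).card = (2 * R i + 1).toNat := by
      rw [Int.card_Icc]
      congr 1
      ring
    have hcard : (box i).card = (2 * R i + 1).toNat * (2 * R i + 1).toNat := by
      simp only [hbox]
      rw [Finset.card_product, hcIcc]
    have h0 : (0 : ℤ) ≤ 2 * R i + 1 := by linarith [hR1 i]
    have hcast : (((2 * R i + 1).toNat : ℕ) : ℝ) = 2 * (R i : ℝ) + 1 := by
      have h' : ((2 * R i + 1).toNat : ℤ) = 2 * R i + 1 := Int.toNat_of_nonneg h0
      exact_mod_cast congrArg (fun z : ℤ => (z : ℝ)) h'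
    have hRle : (R i : ℝ) ≤ r i + 2 := by
      simp only [hR]
      push_cast
      linarith [Int.ceil_lt_add_one (r i)]
    have h7 : 2 * (R i : ℝ) + 1 ≤ 7 * r i := by nlinarith [hr i]
    have hnn : (0 : ℝ) ≤ 2 * (R i : ℝ) + 1 := by
      have h1 : (1 : ℝ) ≤ (R i : ℝ) := by exact_mod_cast hR1 i
      linarith
    calc ((box i).card : ℝ) = (2 * (R i : ℝ) + 1) ^ 2 := by
          rw [hcard, Nat.cast_mul, hcast]; ring
      _ ≤ (7 * r i) ^ 2 := pow_le_pow_left₀ hnn h7 2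
  calc (S.ncard : ℝ) ≤ (T.card : ℝ) := by exact_mod_cast hcount
    _ = (n : ℝ) ^ 2 * ∏ i, ((box i).card : ℝ) := by rw [hTcard]; push_cast; ring
    _ ≤ (n : ℝ) ^ 2 * ∏ i : Fin N, (7 * r i) ^ 2 := by
        apply mul_le_mul_of_nonneg_left _ (by positivity)
        exact Finset.prod_le_prod (fun i _ => by positivity) (fun i _ => hboxb i)

/-- Lemma 3.6 of the paper: for every `ε > 0` and `0 < δ < e^{-j} ε`
there is `C > 0` such that for all `n ≥ 1`, all `0 < t ≤ (j-1)β` and all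
`A ∈ M_j^{β,η}` with `Ξ(A) = t`, the number of `j`-tuples of points of `ℤ²_n` with
`2^{-j} n^{1-a_{i,l}} ≤ d(x_i,x_l) ≤ 2^j n^{1-a_{i,l}+δ}` for all `i ≠ l`
is at most `C n^{2t+2+ε/2}`. -/
theorem count_configurations {j : ℕ} (β η : ℝ)
    (hβ0 : 0 < β) (hβ1 : β < 1) (hη0 : 0 < η) (hη : η ≤ min β (1 - β)) :
    ∀ ε > (0 : ℝ), ∀ δ : ℝ, 0 < δ → δ < Real.exp (-(j : ℝ)) * ε →
      ∃ C > (0 : ℝ), ∀ (n : ℕ), 1 ≤ n →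
        ∀ (t : ℝ) (A : Matrix (Fin j) (Fin j) ℝ),
          0 < t → t ≤ ((j : ℝ) - 1) * β →
          MemUltra η A →
          (∀ i l, i ≠ l → 1 - β ≤ A i l ∧ A i l ≤ 1 - η) →
          Xi A = t →
          (Set.ncard {x : Fin j → ZMod n × ZMod n |
              ∀ i l, i ≠ l →
                (1 / 2 ^ j) * (n : ℝ) ^ (1 - A i l) ≤ torusDist n (x i) (x l) ∧
                torusDist n (x i) (x l) ≤ 2 ^ j * (n : ℝ) ^ (1 - A i l + δ)} : ℝ)
            ≤ C * (n : ℝ) ^ (2 * t + 2 + ε / 2) := by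
  intro ε hε δ hδ0 hδe
  refine ⟨(2 : ℝ) ^ ((j + 3) * (2 * j)) + 1, by positivity, ?_⟩
  intro n hn t A ht0 ht1 hUlt hAβ hXi
  -- `j ≥ 2`
  have hjr : (0 : ℝ) < (j : ℝ) - 1 := by
    by_contra hcon
    push_neg at hcon
    nlinarith
  have hj2 : 2 ≤ j := by
    have h1 : (1 : ℝ) < (j : ℝ) := by linarith
    have : 1 < j := by exact_mod_cast h1
    omega
  obtain ⟨m, rfl⟩ : ∃ m, j = m + 1 := ⟨j - 1, by omega⟩
  have hm1 : 1 ≤ m := by omega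
  haveI : NeZero n := ⟨by omega⟩
  have hn1 : (1 : ℝ) ≤ (n : ℝ) := by exact_mod_cast hn
  have hn0 : (0 : ℝ) < (n : ℝ) := by linarith
  -- the maximizing permutation
  obtain ⟨σ, hσ⟩ := Finite.exists_max (fun τ : Equiv.Perm (Fin (m + 1)) => treeSum A τ)
  have hsup : (⨆ τ : Equiv.Perm (Fin (m + 1)), treeSum A τ) = treeSum A σ :=
    le_antisymm (ciSup_le hσ) (le_ciSup (Finite.bddAbove_range _) σ)
  have htree : treeSum A σ = (m : ℝ) - t := by
    unfold Xi at hXi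
    rw [hsup] at hXi
    push_cast at hXi
    linarith
  -- the parent map
  have hparex : ∀ i : Fin m, ∃ p : Fin (m + 1), p < i.succ ∧
      A (σ p) (σ i.succ) = sSup ((fun l : Fin (m + 1) => A (σ l) (σ i.succ)) '' {l | l < i.succ}) := by
    intro i
    have hne : ({l : Fin (m + 1) | l < i.succ}).Nonempty := ⟨0, i.succ_pos⟩
    have hmem := Set.Nonempty.csSup_mem (hne.image (fun l => A (σ l) (σ i.succ)))
      (Set.toFinite _)
    obtain ⟨p, hp, hpe⟩ := hmem
    exact ⟨p, hp, hpe⟩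
  choose par hparlt hpareq using hparex
  have hane : ∀ i : Fin m, σ (par i) ≠ σ i.succ :=
    fun i h => absurd (σ.injective h) (ne_of_lt (hparlt i))
  -- tree sum computation
  have hTsum : treeSum A σ = ∑ i : Fin m, A (σ (par i)) (σ i.succ) := by
    unfold treeSum
    rw [Fin.sum_univ_succ]
    have h00 : ({i : Fin (m + 1) | i < 0}) = ∅ := by
      ext l
      simp
    rw [h00]
    simp only [Set.image_empty, Real.sSup_empty, zero_add]
    exact Finset.sum_congr rfl (fun i _ => (hpareq i).symm)
  have hsa : ∑ i : Fin m, A (σ (par i)) (σ i.succ) = (m : ℝ) - t := by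
    rw [← hTsum, htree]
  have hsum : ∑ i : Fin m, (1 - A (σ (par i)) (σ i.succ) + δ) = t + (m : ℝ) * δ := by
    have h1 : ∑ i : Fin m, (1 - A (σ (par i)) (σ i.succ) + δ)
        = ∑ i : Fin m, ((1 + δ) - A (σ (par i)) (σ i.succ)) :=
      Finset.sum_congr rfl (fun i _ => by ring)
    rw [h1, Finset.sum_sub_distrib, Finset.sum_const, Finset.card_univ, Fintype.card_fin,
      nsmul_eq_mul, hsa]
    ring
  -- apply the counting lemma
  have hrge : ∀ i : Fin m,
      (1 : ℝ) ≤ 2 ^ (m + 1) * (n : ℝ) ^ (1 - A (σ (par i)) (σ i.succ) + δ) := by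
    intro i
    have h1 : (1 : ℝ) ≤ 2 ^ (m + 1) := by exact_mod_cast Nat.one_le_two_pow
    have hexp : 0 ≤ 1 - A (σ (par i)) (σ i.succ) + δ := by
      have := (hAβ _ _ (hane i)).2
      linarith
    have h2 : (1 : ℝ) ≤ (n : ℝ) ^ (1 - A (σ (par i)) (σ i.succ) + δ) :=
      Real.one_le_rpow hn1 hexp
    nlinarith
  have hmain := count_aux n σ par hparlt
    (fun i => 2 ^ (m + 1) * (n : ℝ) ^ (1 - A (σ (par i)) (σ i.succ) + δ)) hrge
    {x : Fin (m + 1) → ZMod n × ZMod n |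
      ∀ i l, i ≠ l →
        (1 / 2 ^ (m + 1)) * (n : ℝ) ^ (1 - A i l) ≤ torusDist n (x i) (x l) ∧
        torusDist n (x i) (x l) ≤ 2 ^ (m + 1) * (n : ℝ) ^ (1 - A i l + δ)}
    (fun x hx i => (hx _ _ (hane i)).2)
  -- compute the product
  have hprodeq : ∏ i : Fin m,
      (7 * (2 ^ (m + 1) * (n : ℝ) ^ (1 - A (σ (par i)) (σ i.succ) + δ))) ^ 2
      = (7 * (2 : ℝ) ^ (m + 1)) ^ (2 * m) * (n : ℝ) ^ (2 * (t + (m : ℝ) * δ)) := by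
    have h1 : ∀ i : Fin m,
        (7 * (2 ^ (m + 1) * (n : ℝ) ^ (1 - A (σ (par i)) (σ i.succ) + δ))) ^ 2
        = (7 * (2 : ℝ) ^ (m + 1)) ^ 2
          * (n : ℝ) ^ (2 * (1 - A (σ (par i)) (σ i.succ) + δ)) := by
      intro i
      have h2 : (n : ℝ) ^ (2 * (1 - A (σ (par i)) (σ i.succ) + δ))
          = ((n : ℝ) ^ (1 - A (σ (par i)) (σ i.succ) + δ)) ^ 2 := by
        rw [two_mul, Real.rpow_add hn0, sq]
      rw [h2]
      ring
    rw [Finset.prod_congr rfl (fun i _ => h1 i), Finset.prod_mul_distrib, Finset.prod_const,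
      Finset.card_univ, Fintype.card_fin, ← pow_mul, ← rpow_finset_sum hn0]
    congr 1
    rw [← Finset.mul_sum, hsum]
  have hcomb : (n : ℝ) ^ 2 * ((7 * (2 : ℝ) ^ (m + 1)) ^ (2 * m)
      * (n : ℝ) ^ (2 * (t + (m : ℝ) * δ)))
      = (7 * (2 : ℝ) ^ (m + 1)) ^ (2 * m) * (n : ℝ) ^ (2 * (t + (m : ℝ) * δ) + 2) := by
    have h1 : (n : ℝ) ^ (2 * (t + (m : ℝ) * δ) + 2)
        = (n : ℝ) ^ (2 * (t + (m : ℝ) * δ)) * (n : ℝ) ^ (2 : ℝ) := Real.rpow_add hn0 _ _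
    have h2 : (n : ℝ) ^ (2 : ℝ) = (n : ℝ) ^ (2 : ℕ) := by
      rw [← Real.rpow_natCast (n : ℝ) 2]
      norm_num
    rw [h1, h2]
    ring
  -- bound the constant
  have hKC : (7 * (2 : ℝ) ^ (m + 1)) ^ (2 * m)
      ≤ (2 : ℝ) ^ ((m + 1 + 3) * (2 * (m + 1))) + 1 := by
    have hK : (7 : ℝ) * 2 ^ (m + 1) ≤ 2 ^ (m + 4) := by
      have : (2 : ℝ) ^ (m + 4) = 8 * 2 ^ (m + 1) := by ring
      rw [this]
      nlinarith [pow_pos (show (0 : ℝ) < 2 by norm_num) (m + 1)]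
    have hK0 : (0 : ℝ) ≤ 7 * 2 ^ (m + 1) := by positivity
    calc (7 * (2 : ℝ) ^ (m + 1)) ^ (2 * m) ≤ ((2 : ℝ) ^ (m + 4)) ^ (2 * m) :=
          pow_le_pow_left₀ hK0 hK (2 * m)
      _ = (2 : ℝ) ^ ((m + 4) * (2 * m)) := by rw [← pow_mul]
      _ ≤ (2 : ℝ) ^ ((m + 1 + 3) * (2 * (m + 1))) :=
          pow_le_pow_right₀ one_le_two (Nat.mul_le_mul (by omega) (by omega))
      _ ≤ (2 : ℝ) ^ ((m + 1 + 3) * (2 * (m + 1))) + 1 := by linarith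
  -- bound the exponent
  have hexpo : 2 * (t + (m : ℝ) * δ) + 2 ≤ 2 * t + 2 + ε / 2 := by
    have h4m := four_mul_le_exp m
    have hEpos := Real.exp_pos ((m : ℝ) + 1)
    have hδ' : δ ≤ ε / Real.exp ((m : ℝ) + 1) := by
      have hE : Real.exp (-((m : ℝ) + 1)) * ε = ε / Real.exp ((m : ℝ) + 1) := by
        rw [Real.exp_neg]
        ring
      have hh := hδe
      push_cast at hh
      rw [hE] at hh
      linarith
    have hq : 2 * (m : ℝ) * δ ≤ 2 * (m : ℝ) * (ε / Real.exp ((m : ℝ) + 1)) :=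
      mul_le_mul_of_nonneg_left hδ' (by positivity)
    have hq2 : 2 * (m : ℝ) * (ε / Real.exp ((m : ℝ) + 1)) ≤ ε / 2 := by
      rw [← mul_div_assoc, div_le_div_iff₀ hEpos two_pos]
      nlinarith [mul_nonneg hε.le (sub_nonneg.mpr h4m)]
    linarith
  -- conclude
  calc (Set.ncard {x : Fin (m + 1) → ZMod n × ZMod n |
        ∀ i l, i ≠ l →
          (1 / 2 ^ (m + 1)) * (n : ℝ) ^ (1 - A i l) ≤ torusDist n (x i) (x l) ∧
          torusDist n (x i) (x l) ≤ 2 ^ (m + 1) * (n : ℝ) ^ (1 - A i l + δ)} : ℝ)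
      ≤ (n : ℝ) ^ 2 * ∏ i : Fin m,
          (7 * (2 ^ (m + 1) * (n : ℝ) ^ (1 - A (σ (par i)) (σ i.succ) + δ))) ^ 2 := hmain
    _ = (7 * (2 : ℝ) ^ (m + 1)) ^ (2 * m) * (n : ℝ) ^ (2 * (t + (m : ℝ) * δ) + 2) := by
        rw [hprodeq, hcomb]
    _ ≤ ((2 : ℝ) ^ ((m + 1 + 3) * (2 * (m + 1))) + 1) * (n : ℝ) ^ (2 * t + 2 + ε / 2) := by
        apply mul_le_mul hKC (Real.rpow_le_rpow_of_exponent_le hn1 (by linarith))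
          (Real.rpow_nonneg hn0.le _) (by positivity)
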